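/- Let u ∈ D_𝔄(A,B) and v ∈ D_𝔄(B,C) be decomposable 𝔄-module maps between C*-algebras. Then v∘u ∈ D_𝔄(A,C) and ‖v∘u‖_{𝔄-dec} ≤ ‖u‖_{𝔄-dec}·‖v‖_{𝔄-dec}. -/

import Mathlib

open scoped TensorProduct
noncomputable section

/-- A compatible action of a C*-algebra `𝔄` on a C*-algebra `A` (Amini):
bilinear, bounded, compatible with multiplication and star. -/
structure CompatibleAction (𝔄 A : Type*) [NonUnitalNormedRing 𝔄] [StarRing 𝔄]
    [NormedSpace ℂ 𝔄] [NonUnitalNormedRing A] [StarRing A] [NormedSpace ℂ A] where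
  l : 𝔄 →ₗ[ℂ] A →ₗ[ℂ] A
  r : A →ₗ[ℂ] 𝔄 →ₗ[ℂ] A
  bound : ℝ
  bound_pos : 0 < bound
  norm_l : ∀ α a, ‖l α a‖ ≤ bound * ‖a‖ * ‖α‖
  norm_r : ∀ a α, ‖r a α‖ ≤ bound * ‖a‖ * ‖α‖
  l_mul : ∀ α a b, l α (a * b) = (l α a) * b
  mul_r : ∀ a b α, r (a * b) α = a * (r b α)
  star_l : ∀ α a, star (l α a) = r (star a) (star α)
  star_r : ∀ a α, star (r a α) = l (star α) (star a)

/-- The action is commutative: `α • a = a • α`. -/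
def CompatibleAction.IsCommutative {𝔄 A : Type*} [NonUnitalNormedRing 𝔄] [StarRing 𝔄]
    [NormedSpace ℂ 𝔄] [NonUnitalNormedRing A] [StarRing A] [NormedSpace ℂ A]
    (act : CompatibleAction 𝔄 A) : Prop :=
  ∀ (α : 𝔄) (a : A), act.l α a = act.r a α

/-- A C*-seminorm on a complex *-algebra, with the star operation given explicitly
(to accommodate algebraic tensor products, where the star is `tstar`). -/
structure CstarSeminorm (R : Type*) [NonUnitalRing R] [Module ℂ R] (st : R → R) where
  ν : R → ℝ
  nonneg : ∀ x, 0 ≤ ν x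
  add_le : ∀ x y, ν (x + y) ≤ ν x + ν y
  smul_eq : ∀ (c : ℂ) (x : R), ν (c • x) = ‖c‖ * ν x
  mul_le : ∀ x y, ν (x * y) ≤ ν x * ν y
  cstar : ∀ x, ν (st x * x) = ν x ^ 2

def CstarSeminorm.IsNorm {R : Type*} [NonUnitalRing R] [Module ℂ R] {st : R → R}
    (p : CstarSeminorm R st) : Prop := ∀ x, p.ν x = 0 → x = 0

/-- `γ` is the maximal C*-norm: it is a norm and dominates every C*-seminorm. -/
def CstarSeminorm.IsMax {R : Type*} [NonUnitalRing R] [Module ℂ R] {st : R → R}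
    (γ : CstarSeminorm R st) : Prop :=
  γ.IsNorm ∧ ∀ p : CstarSeminorm R st, ∀ x, p.ν x ≤ γ.ν x

/-- `γ` is the minimal C*-norm: it is a norm dominated by every C*-norm. -/
def CstarSeminorm.IsMin {R : Type*} [NonUnitalRing R] [Module ℂ R] {st : R → R}
    (γ : CstarSeminorm R st) : Prop :=
  γ.IsNorm ∧ ∀ p : CstarSeminorm R st, p.IsNorm → ∀ x, γ.ν x ≤ p.ν x

/-- Quotient seminorm `‖x + I‖ = inf_{i ∈ I} ν (x + i)`. -/
def quotNorm {R : Type*} [AddCommGroup R] (ν : R → ℝ) (I : Set R) (x : R) : ℝ :=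
  sInf ((fun i => ν (x + i)) '' I)

/-- The two-sided ideal (as a `ℂ`-submodule) generated by a set `G`. -/
def idealSpan (R : Type*) [NonUnitalRing R] [Module ℂ R] (G : Set R) : Submodule ℂ R :=
  Submodule.span ℂ
    {y | ∃ g ∈ G, y = g ∨ (∃ u, y = u * g) ∨ (∃ v, y = g * v) ∨ ∃ u v, y = u * g * v}

/-- The star operation on the algebraic tensor product `A ⊗[ℂ] B`,
`(a ⊗ b)* = a* ⊗ b*` (conjugate-linear, hence only an `AddMonoidHom`). -/
def tstar (A B : Type*) [Ring A] [StarRing A] [Algebra ℂ A] [StarModule ℂ A]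
    [Ring B] [StarRing B] [Algebra ℂ B] [StarModule ℂ B] : A ⊗[ℂ] B →+ A ⊗[ℂ] B :=
  TensorProduct.liftAddHom
    { toFun := fun a =>
        { toFun := fun b => star a ⊗ₜ[ℂ] star b
          map_zero' := by simp
          map_add' := fun b c => by simp [star_add, TensorProduct.tmul_add] }
      map_zero' := by ext b; simp
      map_add' := fun a c => by ext b; simp [star_add, TensorProduct.add_tmul] }
    (fun c a b => by simp [star_smul, TensorProduct.smul_tmul, TensorProduct.tmul_smul])

section TensorIdeal

variable {𝔄 A B : Type*}
  [NormedRing 𝔄] [StarRing 𝔄] [NormedAlgebra ℂ 𝔄]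
  [NormedRing A] [StarRing A] [NormedAlgebra ℂ A]
  [NormedRing B] [StarRing B] [NormedAlgebra ℂ B]

/-- Generators `a·α ⊗ b − a ⊗ α·b` of the module ideal `I_{A,B}`. -/
def tensorGens (actA : CompatibleAction 𝔄 A) (actB : CompatibleAction 𝔄 B) :
    Set (A ⊗[ℂ] B) :=
  {x | ∃ (α : 𝔄) (a : A) (b : B), x = (actA.r a α) ⊗ₜ[ℂ] b - a ⊗ₜ[ℂ] (actB.l α b)}

/-- The ideal `I_{A,B}` of `A ⊙ B` generated by `a·α ⊗ b − a ⊗ α·b`. -/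
def moduleIdeal (actA : CompatibleAction 𝔄 A) (actB : CompatibleAction 𝔄 B) :
    Submodule ℂ (A ⊗[ℂ] B) :=
  idealSpan _ (tensorGens actA actB)

end TensorIdeal

/-- Algebraic positivity in a *-ring: `x = y* y`. -/
def StarPos {R : Type*} [Mul R] [Star R] (x : R) : Prop := ∃ y, x = star y * y

/-- A completely positive map: positive matrices over `A` map to positive matrices over `B`. -/
def IsCP {A B : Type*} [NonUnitalRing A] [StarRing A] [NonUnitalRing B] [StarRing B]
    (u : A → B) : Prop :=
  ∀ (n : ℕ) (M : Matrix (Fin n) (Fin n) A), StarPos M → StarPos (M.map u)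

/-- An `𝔄`-bimodule map. -/
def IsModuleMap {𝔄 A B : Type*} [NonUnitalNormedRing 𝔄] [StarRing 𝔄] [NormedSpace ℂ 𝔄]
    [NonUnitalNormedRing A] [StarRing A] [NormedSpace ℂ A]
    [NonUnitalNormedRing B] [StarRing B] [NormedSpace ℂ B]
    (actA : CompatibleAction 𝔄 A) (actB : CompatibleAction 𝔄 B) (u : A → B) : Prop :=
  (∀ α a, u (actA.l α a) = actB.l α (u a)) ∧ ∀ a α, u (actA.r a α) = actB.r (u a) α

section Dec

variable {𝔄 A B : Type*}
  [NormedRing 𝔄] [StarRing 𝔄] [CStarRing 𝔄] [NormedAlgebra ℂ 𝔄] [StarModule ℂ 𝔄]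
  [CompleteSpace 𝔄]
  [NormedRing A] [StarRing A] [CStarRing A] [NormedAlgebra ℂ A] [StarModule ℂ A]
  [CompleteSpace A]
  [NormedRing B] [StarRing B] [CStarRing B] [NormedAlgebra ℂ B] [StarModule ℂ B]
  [CompleteSpace B]

/-- The adjoint map `u_* (a) = u(a*)*`. -/
def adjMap (u : A → B) : A → B := fun a => star (u (star a))

/-- The `2×2` matrix map `V = [[S₁, u], [u_*, S₂]] : A → M₂(B)`. -/
def Vmat (S₁ u S₂ : A → B) : A → Matrix (Fin 2) (Fin 2) B :=
  fun a => !![S₁ a, u a; adjMap u a, S₂ a]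

/-- A completely positive `𝔄`-bimodule map. -/
def IsCPModuleMap (actA : CompatibleAction 𝔄 A) (actB : CompatibleAction 𝔄 B)
    (u : A → B) : Prop :=
  IsCP u ∧ IsModuleMap actA actB u

/-- The set of values `max{‖S₁‖, ‖S₂‖}` over all decompositions of `u` witnessing
membership in `D_𝔄(A,B)` (Haagerup). -/
def decSet (actA : CompatibleAction 𝔄 A) (actB : CompatibleAction 𝔄 B)
    (u : A →L[ℂ] B) : Set ℝ :=
  {m | ∃ S₁ S₂ : A →L[ℂ] B, IsCPModuleMap actA actB S₁ ∧ IsCPModuleMap actA actB S₂ ∧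
      IsCP (Vmat S₁ u S₂) ∧ m = max ‖S₁‖ ‖S₂‖}

/-- `u ∈ D_𝔄(A, B)`: `u` is `𝔄`-decomposable. -/
def IsDecomposable (actA : CompatibleAction 𝔄 A) (actB : CompatibleAction 𝔄 B)
    (u : A →L[ℂ] B) : Prop :=
  (decSet actA actB u).Nonempty

/-- The `𝔄`-decomposable norm `‖u‖_{𝔄-dec}`. -/
def decNorm (actA : CompatibleAction 𝔄 A) (actB : CompatibleAction 𝔄 B)
    (u : A →L[ℂ] B) : ℝ :=
  sInf (decSet actA actB u)

end Dec


/-!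
Given decompositions `[[S₁, u], [u_*, S₂]]` of `u` and `[[T₁, v], [v_*, T₂]]` of `v`, the pair
`T₁ S₁, T₂ S₂` decomposes `v u`. For positive `M ∈ Mₙ(A)`, the first matrix map sends `M` to a
positive element of `M₂ₙ(B)`, the second one sends that to a positive element of `M₂ₙ(M₂(C))`,
and the compression of the latter to the entries `((i, α), α)` is
`[[T₁ S₁, v u], [(v u)_*, T₂ S₂]](M)`. Compressions stay positive because in a C*-algebra every
positive element, in particular every sum `∑ₖ zₖ* zₖ`, is of the form `y* y`.
Finally `‖Tᵢ Sᵢ‖ ≤ ‖Tᵢ‖ ‖Sᵢ‖` gives the bound on the infima.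
-/

theorem StarPos.map {R S F : Type*} [Mul R] [Star R] [Mul S] [Star S] [FunLike F R S]
    [MulHomClass F R S] [StarHomClass F R S] (f : F) {x : R} (hx : StarPos x) :
    StarPos (f x) := by
  obtain ⟨y, rfl⟩ := hx
  exact ⟨f y, by rw [map_mul, map_star]⟩

theorem starPos_iff_nonneg {D : Type*} [CStarAlgebra D] [PartialOrder D] [StarOrderedRing D]
    {x : D} : StarPos x ↔ 0 ≤ x := by
  refine ⟨?_, fun hx => ⟨CFC.sqrt x, ?_⟩⟩
  · rintro ⟨y, rfl⟩
    exact star_mul_self_nonneg y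
  · rw [(CFC.sqrt_nonneg x).isSelfAdjoint.star_eq, CFC.sqrt_mul_sqrt_self x hx]

theorem StarPos.sum {D ι : Type*} [CStarAlgebra D] [PartialOrder D] [StarOrderedRing D]
    {s : Finset ι} {x : ι → D} (hx : ∀ i ∈ s, StarPos (x i)) : StarPos (∑ i ∈ s, x i) :=
  starPos_iff_nonneg.2 (Finset.sum_nonneg fun i hi => starPos_iff_nonneg.1 (hx i hi))

namespace Matrix

variable {m n : Type*} [Fintype m] [Fintype n] [DecidableEq n]

theorem starPos_conjTranspose_mul_self {𝒞 : Type*} [CStarAlgebra 𝒞] (Y : Matrix m n 𝒞) :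
    StarPos (Yᴴ * Y) := by
  let _ : PartialOrder 𝒞 := CStarAlgebra.spectralOrder 𝒞
  have : StarOrderedRing 𝒞 := CStarAlgebra.spectralOrderedRing 𝒞
  cases isEmpty_or_nonempty n with
  | inl _ => exact ⟨0, Subsingleton.elim _ _⟩
  | inr hn =>
    obtain ⟨b⟩ := hn
    -- `Z k` has row `k` of `Y` as its row `b` and zeros elsewhere.
    let Z : m → Matrix n n 𝒞 := fun k => of fun a c => if a = b then Y k c else 0
    have hsum : Yᴴ * Y = ∑ k, (Z k)ᴴ * Z k := by
      ext i j
      simp [Z, mul_apply, Matrix.sum_apply, apply_ite star, ite_mul]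
    have hZ : StarPos (CStarMatrix.ofMatrixStarAlgEquiv (Yᴴ * Y)) := by
      rw [hsum, map_sum]
      exact StarPos.sum fun k _ => StarPos.map CStarMatrix.ofMatrixStarAlgEquiv ⟨Z k, rfl⟩
    simpa using hZ.map CStarMatrix.ofMatrixStarAlgEquiv.symm

end Matrix

open Matrix in
theorem StarPos.submatrix_equiv {R m n : Type*} [NonUnitalSemiring R] [StarRing R] [Fintype m]
    [Fintype n] {M : Matrix m m R} (hM : StarPos M) (e : n ≃ m) :
    StarPos (M.submatrix e e) := by
  obtain ⟨y, rfl⟩ := hM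
  exact ⟨y.submatrix e e, by
    rw [star_eq_conjTranspose, star_eq_conjTranspose, conjTranspose_submatrix,
      submatrix_mul_equiv]⟩

open Matrix in
theorem StarPos.submatrix {𝒞 m n : Type*} [CStarAlgebra 𝒞] [Fintype m] [Fintype n]
    [DecidableEq n] {M : Matrix m m 𝒞} (hM : StarPos M) (f : n → m) :
    StarPos (M.submatrix f f) := by
  obtain ⟨y, rfl⟩ := hM
  rw [star_eq_conjTranspose, submatrix_mul _ _ f id f Function.bijective_id,
    ← conjTranspose_submatrix]
  exact starPos_conjTranspose_mul_self _

namespace Matrix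

variable (I J R : Type*) [Fintype I] [Fintype J] [AddCommMonoid R] [Mul R] [Star R]

def compStarRingEquiv : Matrix I I (Matrix J J R) ≃⋆+* Matrix (I × J) (I × J) R where
  __ := compRingEquiv I J R
  map_star' _ := rfl

end Matrix

theorem IsCP.map_starPos {A B ι : Type*} [NonUnitalRing A] [StarRing A] [NonUnitalRing B]
    [StarRing B] [Fintype ι] {u : A → B} (hu : IsCP u) {M : Matrix ι ι A} (hM : StarPos M) :
    StarPos (M.map u) := by
  let e := Fintype.equivFin ι
  simpa [Matrix.submatrix_map] using
    StarPos.submatrix_equiv (hu _ _ (hM.submatrix_equiv e.symm)) e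

theorem IsCP.comp {A B C : Type*} [NonUnitalRing A] [StarRing A] [NonUnitalRing B]
    [StarRing B] [NonUnitalRing C] [StarRing C] {u : A → B} {v : B → C} (hv : IsCP v)
    (hu : IsCP u) : IsCP (v ∘ u) := fun n M hM => by
  simpa only [Matrix.map_map] using hv n _ (hu n M hM)

theorem Vmat_Vmat_apply_self {A B C : Type*} [NormedRing A] [StarRing A] [NormedRing B]
    [StarRing B] [NormedRing C] [StarRing C] (S₁ u S₂ : A → B) (T₁ v T₂ : B → C) (a : A)
    (i j : Fin 2) :
    Vmat T₁ v T₂ (Vmat S₁ u S₂ a i j) i j = Vmat (T₁ ∘ S₁) (v ∘ u) (T₂ ∘ S₂) a i j := by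
  fin_cases i <;> fin_cases j <;> simp [Vmat, adjMap]

theorem IsCP.Vmat_comp {A B C : Type*} [NormedRing A] [StarRing A] [NormedRing B] [StarRing B]
    [CStarAlgebra C] {S₁ u S₂ : A → B} {T₁ v T₂ : B → C} (hu : IsCP (Vmat S₁ u S₂))
    (hv : IsCP (Vmat T₁ v T₂)) : IsCP (Vmat (T₁ ∘ S₁) (v ∘ u) (T₂ ∘ S₂)) := by
  intro n M hM
  let flatB := Matrix.compStarRingEquiv (Fin n) (Fin 2) B
  let flatC := Matrix.compStarRingEquiv (Fin n) (Fin 2) C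
  let flatC' := Matrix.compStarRingEquiv (Fin n × Fin 2) (Fin 2) C
  have hU : StarPos (flatB (M.map (Vmat S₁ u S₂))) := StarPos.map flatB (hu n M hM)
  have hVU : StarPos (flatC' ((flatB (M.map (Vmat S₁ u S₂))).map (Vmat T₁ v T₂))) :=
    StarPos.map flatC' (hv.map_starPos hU)
  -- Entry `(α, β)` of block `((i, α), (j, β))` is entry `(α, β)` of the composite at `M i j`.
  have hDiag := StarPos.submatrix hVU fun p : Fin n × Fin 2 => (p, p.2)
  have hComp : StarPos (flatC.symm _) := StarPos.map flatC.symm hDiag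
  convert hComp using 1
  ext i j α β
  exact (Vmat_Vmat_apply_self S₁ u S₂ T₁ v T₂ (M i j) α β).symm

theorem Real.le_sInf_mul_sInf {S T : Set ℝ} {p : ℝ} (hS : S.Nonempty) (hT : T.Nonempty)
    (hS₀ : ∀ s ∈ S, 0 ≤ s) (hT₀ : ∀ t ∈ T, 0 ≤ t) (h : ∀ s ∈ S, ∀ t ∈ T, p ≤ s * t) :
    p ≤ sInf S * sInf T := by
  have hS_le : ∀ t ∈ T, p ≤ t * sInf S := fun t ht => by
    rw [← smul_eq_mul, ← Real.sInf_smul_of_nonneg (hT₀ t ht)]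
    refine le_csInf hS.smul_set ?_
    rintro _ ⟨s, hs, rfl⟩
    exact (h s hs t ht).trans_eq (mul_comm s t)
  rw [← smul_eq_mul, ← Real.sInf_smul_of_nonneg (Real.sInf_nonneg hS₀)]
  refine le_csInf hT.smul_set ?_
  rintro _ ⟨t, ht, rfl⟩
  exact (hS_le t ht).trans_eq (mul_comm t _)

theorem IsModuleMap.comp {𝔄 A B C : Type*} [NonUnitalNormedRing 𝔄] [StarRing 𝔄]
    [NormedSpace ℂ 𝔄] [NonUnitalNormedRing A] [StarRing A] [NormedSpace ℂ A]
    [NonUnitalNormedRing B] [StarRing B] [NormedSpace ℂ B]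
    [NonUnitalNormedRing C] [StarRing C] [NormedSpace ℂ C]
    {actA : CompatibleAction 𝔄 A} {actB : CompatibleAction 𝔄 B} {actC : CompatibleAction 𝔄 C}
    {u : A → B} {v : B → C} (hv : IsModuleMap actB actC v) (hu : IsModuleMap actA actB u) :
    IsModuleMap actA actC (v ∘ u) :=
  ⟨fun α a => by simp only [Function.comp, hu.1, hv.1],
    fun a α => by simp only [Function.comp, hu.2, hv.2]⟩

section Decomposable

variable {𝔄 A B C : Type*} [NormedRing 𝔄] [StarRing 𝔄] [NormedAlgebra ℂ 𝔄]
  [NormedRing A] [StarRing A] [NormedAlgebra ℂ A] [NormedRing B] [StarRing B] [NormedAlgebra ℂ B]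
  {actA : CompatibleAction 𝔄 A} {actB : CompatibleAction 𝔄 B}

theorem IsCPModuleMap.comp [NormedRing C] [StarRing C] [NormedAlgebra ℂ C]
    {actC : CompatibleAction 𝔄 C} {u : A → B} {v : B → C} (hv : IsCPModuleMap actB actC v)
    (hu : IsCPModuleMap actA actB u) : IsCPModuleMap actA actC (v ∘ u) :=
  ⟨hv.1.comp hu.1, hv.2.comp hu.2⟩

theorem nonneg_of_mem_decSet {u : A →L[ℂ] B} {m : ℝ} (hm : m ∈ decSet actA actB u) : 0 ≤ m := by
  obtain ⟨S₁, S₂, -, -, -, rfl⟩ := hm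
  exact (norm_nonneg S₁).trans (le_max_left _ _)

theorem exists_mem_decSet_comp_le_mul [CStarAlgebra C] {actC : CompatibleAction 𝔄 C}
    {u : A →L[ℂ] B} {v : B →L[ℂ] C} {s t : ℝ} (hs : s ∈ decSet actA actB u)
    (ht : t ∈ decSet actB actC v) : ∃ r ∈ decSet actA actC (v.comp u), r ≤ s * t := by
  obtain ⟨S₁, S₂, hS₁, hS₂, hSu, rfl⟩ := hs
  obtain ⟨T₁, T₂, hT₁, hT₂, hTv, rfl⟩ := ht
  refine ⟨_, ⟨T₁.comp S₁, T₂.comp S₂, hT₁.comp hS₁, hT₂.comp hS₂, hSu.Vmat_comp hTv, rfl⟩, ?_⟩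
  calc max ‖T₁.comp S₁‖ ‖T₂.comp S₂‖ ≤ max (‖T₁‖ * ‖S₁‖) (‖T₂‖ * ‖S₂‖) :=
        max_le_max (T₁.opNorm_comp_le S₁) (T₂.opNorm_comp_le S₂)
    _ ≤ max ‖T₁‖ ‖T₂‖ * max ‖S₁‖ ‖S₂‖ := by
        apply max_le <;> gcongr <;> simp
    _ = _ := mul_comm _ _

end Decomposable

theorem decNorm_comp_general
    {𝔄 A B C : Type*}
    [NormedRing 𝔄] [StarRing 𝔄] [NormedAlgebra ℂ 𝔄]
    [NormedRing A] [StarRing A] [NormedAlgebra ℂ A]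
    [NormedRing B] [StarRing B] [NormedAlgebra ℂ B]
    [NormedRing C] [StarRing C] [CStarRing C] [NormedAlgebra ℂ C] [StarModule ℂ C]
    [CompleteSpace C]
    (actA : CompatibleAction 𝔄 A) (actB : CompatibleAction 𝔄 B)
    (actC : CompatibleAction 𝔄 C)
    (u : A →L[ℂ] B) (v : B →L[ℂ] C)
    (hu : IsDecomposable actA actB u) (hv : IsDecomposable actB actC v) :
    IsDecomposable actA actC (v.comp u) ∧
      decNorm actA actC (v.comp u) ≤ decNorm actA actB u * decNorm actB actC v := by
  let _ : CStarAlgebra C := {}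
  obtain ⟨s, hs⟩ := hu
  obtain ⟨t, ht⟩ := hv
  obtain ⟨r, hr, -⟩ := exists_mem_decSet_comp_le_mul hs ht
  refine ⟨⟨r, hr⟩, Real.le_sInf_mul_sInf ⟨s, hs⟩ ⟨t, ht⟩ (fun _ => nonneg_of_mem_decSet)
    (fun _ => nonneg_of_mem_decSet) fun s' hs' t' ht' => ?_⟩
  obtain ⟨r', hr', hr'_le⟩ := exists_mem_decSet_comp_le_mul hs' ht'
  exact (csInf_le ⟨0, fun _ => nonneg_of_mem_decSet⟩ hr').trans hr'_le

/-- The composition of decomposable `𝔄`-module maps is decomposable,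
and `‖v ∘ u‖_{𝔄-dec} ≤ ‖u‖_{𝔄-dec} · ‖v‖_{𝔄-dec}`. -/
theorem decNorm_comp
    {𝔄 A B C : Type*}
    [NormedRing 𝔄] [StarRing 𝔄] [CStarRing 𝔄] [NormedAlgebra ℂ 𝔄] [StarModule ℂ 𝔄]
    [CompleteSpace 𝔄]
    [NormedRing A] [StarRing A] [CStarRing A] [NormedAlgebra ℂ A] [StarModule ℂ A]
    [CompleteSpace A]
    [NormedRing B] [StarRing B] [CStarRing B] [NormedAlgebra ℂ B] [StarModule ℂ B]
    [CompleteSpace B]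
    [NormedRing C] [StarRing C] [CStarRing C] [NormedAlgebra ℂ C] [StarModule ℂ C]
    [CompleteSpace C]
    (actA : CompatibleAction 𝔄 A) (actB : CompatibleAction 𝔄 B)
    (actC : CompatibleAction 𝔄 C)
    (u : A →L[ℂ] B) (v : B →L[ℂ] C)
    (hu : IsDecomposable actA actB u) (hv : IsDecomposable actB actC v) :
    IsDecomposable actA actC (v.comp u) ∧
      decNorm actA actC (v.comp u) ≤ decNorm actA actB u * decNorm actB actC v :=
  decNorm_comp_general actA actB actC u v hu hv
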